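/- arXiv:2505.16804 — 4 statements merged into one kernel-verified Lean document; each statement's English description precedes it below -/
import Mathlib

section
/- There exists a constant C > 0 such that for every complex number z with |Im(z)| ≤ 1, one has |sinc(z)²| ≤ C·e^{2·Im(z)}/(1 + Re(z)²), where sinc(z) = sin(z)/z for z ≠ 0 and sinc(0) = 1. -/
open Complex

noncomputable def sinc (z : ℂ) : ℂ := if z = 0 then 1 else Complex.sin z / z

/-!
Near the origin `sin z / z` is bounded by the Taylor estimate `‖sin z‖ ≤ 2 ‖z‖`; away from it
`‖sin z‖ ≤ exp |Im z|` gives `‖sinc z‖ ≤ exp |Im z| / ‖z‖`, and `1 + (Re z)² ≤ 2 ‖z‖²`. So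
`(1 + (Re z)²) ‖sinc z‖²` is bounded on every horizontal strip, and on `|Im z| ≤ 1` the weight
`exp (2 Im z) ≥ exp (-2)` only changes the constant.
-/

lemma Complex.norm_sin_le_exp_abs_im (z : ℂ) : ‖Complex.sin z‖ ≤ Real.exp |z.im| := by
  have hexp : ∀ w : ℂ, |w.re| ≤ |z.im| → ‖Complex.exp w‖ ≤ Real.exp |z.im| := fun w hw => by
    rw [Complex.norm_exp]
    exact Real.exp_le_exp.2 ((le_abs_self _).trans hw)
  calc ‖Complex.sin z‖ = ‖Complex.exp (-z * I) - Complex.exp (z * I)‖ / 2 := by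
        simp [Complex.sin]
    _ ≤ (‖Complex.exp (-z * I)‖ + ‖Complex.exp (z * I)‖) / 2 := by gcongr; exact norm_sub_le _ _
    _ ≤ (Real.exp |z.im| + Real.exp |z.im|) / 2 := by
        gcongr <;> apply hexp <;> simp
    _ = Real.exp |z.im| := by ring

lemma Complex.norm_sin_le_two_mul_norm {z : ℂ} (hz : ‖z‖ ≤ 1) : ‖Complex.sin z‖ ≤ 2 * ‖z‖ := by
  have hz3 : ‖z‖ ^ 3 ≤ ‖z‖ := pow_le_of_le_one (norm_nonneg z) hz (by norm_num)
  have hz5 : ‖z‖ ^ 5 ≤ ‖z‖ := pow_le_of_le_one (norm_nonneg z) hz (by norm_num)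
  calc ‖Complex.sin z‖ ≤ ‖Complex.sin z - (z - z ^ 3 / 6)‖ + (‖z‖ + ‖z‖ ^ 3 / 6) := by
        refine (norm_le_norm_sub_add _ (z - z ^ 3 / 6)).trans ?_
        gcongr
        refine (norm_sub_le _ _).trans_eq ?_
        simp [norm_pow]
    _ ≤ ‖z‖ ^ 5 / 100 + (‖z‖ + ‖z‖ ^ 3 / 6) := by gcongr; exact Complex.sin_bound hz
    _ ≤ 2 * ‖z‖ := by linarith [norm_nonneg z]

lemma sinc_of_ne_zero {z : ℂ} (hz : z ≠ 0) : sinc z = Complex.sin z / z := if_neg hz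

lemma norm_sinc_le_two {z : ℂ} (hz : ‖z‖ ≤ 1) : ‖sinc z‖ ≤ 2 := by
  rcases eq_or_ne z 0 with rfl | hz0
  · simp [sinc]
  rw [sinc_of_ne_zero hz0, norm_div, div_le_iff₀ (norm_pos_iff.2 hz0)]
  exact Complex.norm_sin_le_two_mul_norm hz

lemma norm_sinc_le_exp_abs_im_div {z : ℂ} (hz : z ≠ 0) :
    ‖sinc z‖ ≤ Real.exp |z.im| / ‖z‖ := by
  rw [sinc_of_ne_zero hz, norm_div]
  gcongr
  exact Complex.norm_sin_le_exp_abs_im z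

lemma one_add_re_sq_mul_norm_sinc_sq_le {a : ℝ} {z : ℂ} (hz : |z.im| ≤ a) :
    (1 + z.re ^ 2) * ‖sinc z‖ ^ 2 ≤ 8 * Real.exp (2 * a) := by
  have hre : z.re ^ 2 ≤ ‖z‖ ^ 2 := sq_le_sq.2 ((abs_re_le_norm z).trans_eq (abs_norm z).symm)
  have hexp : 1 ≤ Real.exp (2 * a) := Real.one_le_exp (by linarith [abs_nonneg z.im])
  rcases le_or_gt ‖z‖ 1 with hsmall | hlarge
  · have hsinc := norm_sinc_le_two hsmall
    have : ‖z‖ ^ 2 ≤ 1 := pow_le_one₀ (norm_nonneg z) hsmall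
    calc (1 + z.re ^ 2) * ‖sinc z‖ ^ 2 ≤ 2 * 2 ^ 2 := by gcongr; linarith
      _ ≤ 8 * Real.exp (2 * a) := by linarith
  · have hz0 : z ≠ 0 := norm_pos_iff.1 (zero_lt_one.trans hlarge)
    have hnorm : 1 ≤ ‖z‖ ^ 2 := one_le_pow₀ hlarge.le
    have hsin : Real.exp |z.im| ^ 2 ≤ Real.exp (2 * a) := by
      rw [← Real.exp_nat_mul]; gcongr; push_cast; linarith
    calc (1 + z.re ^ 2) * ‖sinc z‖ ^ 2
        ≤ (2 * ‖z‖ ^ 2) * (Real.exp |z.im| / ‖z‖) ^ 2 := by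
          gcongr
          · linarith
          · exact norm_sinc_le_exp_abs_im_div hz0
      _ = 2 * Real.exp |z.im| ^ 2 := by field_simp
      _ ≤ 8 * Real.exp (2 * a) := by linarith

theorem sinc_sq_bound :
    ∃ C > 0, ∀ z : ℂ, |z.im| ≤ 1 →
      ‖sinc z ^ 2‖ ≤ C * Real.exp (2 * z.im) / (1 + z.re ^ 2) := by
  refine ⟨8 * Real.exp 4, by positivity, fun z hz => ?_⟩
  have hweight : Real.exp (-2) ≤ Real.exp (2 * z.im) :=
    Real.exp_le_exp.2 (by linarith [(abs_le.1 hz).1])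
  have hC : 8 * Real.exp 2 = 8 * Real.exp 4 * Real.exp (-2) := by
    rw [mul_assoc, ← Real.exp_add]; norm_num
  rw [norm_pow, le_div_iff₀ (by positivity), mul_comm]
  calc (1 + z.re ^ 2) * ‖sinc z‖ ^ 2 ≤ 8 * Real.exp (2 * 1) :=
        one_add_re_sq_mul_norm_sinc_sq_le hz
    _ ≤ 8 * Real.exp 4 * Real.exp (2 * z.im) := by
        rw [mul_one, hC]; gcongr
end

section
/- Let 0 < p ≤ 2, 0 < β ≤ 1, α = 1 - p/3, and define f(z) = β^α·(1 + β^{2(1-α)/p}·z²)^{p/2} for z ∈ ℂ with |Im(z)| < β^{-(1-α)/p}. Then there is a universal constant C (independent of p and β) such that |f''(z)| ≤ C·β^{α + 2(1-α)/p} for all z with |Im(z)| < (1/2)·β^{-(1-α)/p}. -/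
/-!
For `α = 1 - p / 3` the exponents collapse: `2 (1 - α) / p = 2 / 3` and `-(1 - α) / p = -1 / 3`,
so `f z = β ^ α * (1 + c z²) ^ s` with `c = β ^ (2 / 3)`, `s = p / 2`, and the strip of half-width
`β ^ (-1 / 3) / 2` is where `c (Im z)² < 1 / 4`. There `w = 1 + c z²` has `Re w > 3 / 4`, and the
second derivative `2 c s (w ^ (s - 1) + 2 (s - 1) (w - 1) w ^ (s - 2))` is at most `(136 / 9) c s`
because both exponents are nonpositive.
-/

open Complex

theorem hasDerivAt_one_add_mul_sq_cpow {c s z : ℂ} (hz : 1 + c * z ^ 2 ∈ slitPlane) :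
    HasDerivAt (fun z => (1 + c * z ^ 2) ^ s) (s * (1 + c * z ^ 2) ^ (s - 1) * (2 * c * z)) z := by
  have hw : HasDerivAt (fun z => 1 + c * z ^ 2) (2 * c * z) z := by
    simpa [mul_comm, mul_left_comm] using ((hasDerivAt_pow 2 z).const_mul c).const_add 1
  exact hw.cpow_const hz

theorem iteratedDeriv_two_one_add_mul_sq_cpow {c s z : ℂ} (hz : 1 + c * z ^ 2 ∈ slitPlane) :
    iteratedDeriv 2 (fun z => (1 + c * z ^ 2) ^ s) z =
      2 * c * s * ((1 + c * z ^ 2) ^ (s - 1) +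
        2 * (s - 1) * (c * z ^ 2) * (1 + c * z ^ 2) ^ (s - 2)) := by
  have hopen : IsOpen {z : ℂ | 1 + c * z ^ 2 ∈ slitPlane} :=
    isOpen_slitPlane.preimage (by fun_prop)
  have hderiv : deriv (fun z => (1 + c * z ^ 2) ^ s) =ᶠ[nhds z]
      fun z => 2 * c * s * ((1 + c * z ^ 2) ^ (s - 1) * z) := by
    filter_upwards [hopen.mem_nhds hz] with x hx
    rw [(hasDerivAt_one_add_mul_sq_cpow hx).deriv]
    ring
  have hsecond : HasDerivAt (fun z => 2 * c * s * ((1 + c * z ^ 2) ^ (s - 1) * z))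
      (2 * c * s * ((s - 1) * (1 + c * z ^ 2) ^ (s - 1 - 1) * (2 * c * z) * z +
        (1 + c * z ^ 2) ^ (s - 1) * 1)) z :=
    ((hasDerivAt_one_add_mul_sq_cpow hz).mul (hasDerivAt_id' z)).const_mul _
  rw [iteratedDeriv_succ, iteratedDeriv_one, hderiv.deriv_eq, hsecond.deriv, sub_sub,
    one_add_one_eq_two]
  ring

theorem norm_cpow_sub_one_add_le {s : ℝ} (hs₀ : 0 ≤ s) (hs₁ : s ≤ 1) {w : ℂ} (hw : 3 / 4 ≤ ‖w‖) :
    ‖w ^ ((s : ℂ) - 1) + 2 * ((s : ℂ) - 1) * (w - 1) * w ^ ((s : ℂ) - 2)‖ ≤ 68 / 9 := by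
  have hK : 0 < ‖w‖ := by linarith
  have hcast : ∀ t : ℝ, (s : ℂ) - t = ((s - t : ℝ) : ℂ) := fun t => by push_cast; rfl
  have hnorm₁ : ‖w ^ ((s : ℂ) - 1)‖ = ‖w‖ ^ (s - 1) := by
    rw [← ofReal_one, hcast, norm_cpow_real]
  have hnorm₂ : ‖w ^ ((s : ℂ) - 2)‖ = ‖w‖ ^ (s - 1) / ‖w‖ := by
    rw [← ofReal_ofNat, hcast, norm_cpow_real, ← Real.rpow_sub_one hK.ne']
    ring_nf
  have hE : ‖w‖ ^ (s - 1) ≤ 4 / 3 :=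
    calc ‖w‖ ^ (s - 1) ≤ (3 / 4 : ℝ) ^ (s - 1) :=
          Real.rpow_le_rpow_of_nonpos (by norm_num) hw (by linarith)
      _ ≤ (3 / 4 : ℝ) ^ (-1 : ℝ) :=
          Real.rpow_le_rpow_of_exponent_ge (by norm_num) (by norm_num) (by linarith)
      _ = 4 / 3 := by norm_num [Real.rpow_neg_one]
  have hE₀ : 0 ≤ ‖w‖ ^ (s - 1) := by positivity
  have hs : ‖(s : ℂ) - 1‖ ≤ 1 := by
    rw [← ofReal_one, hcast, norm_real, Real.norm_eq_abs, abs_le]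
    constructor <;> linarith
  have hw₁ : ‖w - 1‖ ≤ ‖w‖ + 1 := by simpa using norm_sub_le w 1
  have hinv : 1 / ‖w‖ ≤ 4 / 3 := by rw [div_le_iff₀ hK]; linarith
  calc _ ≤ ‖w ^ ((s : ℂ) - 1)‖ + 2 * ‖(s : ℂ) - 1‖ * ‖w - 1‖ * ‖w ^ ((s : ℂ) - 2)‖ := by
        simpa [mul_assoc] using
          norm_add_le (w ^ ((s : ℂ) - 1)) (2 * ((s : ℂ) - 1) * (w - 1) * w ^ ((s : ℂ) - 2))
    _ ≤ ‖w‖ ^ (s - 1) + 2 * 1 * (‖w‖ + 1) * (‖w‖ ^ (s - 1) / ‖w‖) := by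
        rw [hnorm₁, hnorm₂]; gcongr
    _ = ‖w‖ ^ (s - 1) * (3 + 2 * (1 / ‖w‖)) := by field_simp; ring
    _ ≤ 4 / 3 * (3 + 2 * (4 / 3)) := by gcongr
    _ = 68 / 9 := by norm_num

theorem three_quarters_lt_re_one_add_mul_sq {c r : ℝ} (hc : 0 ≤ c) (hcr : c * r ^ 2 = 1) {z : ℂ}
    (hz : |z.im| < r / 2) : 3 / 4 < (1 + c * z ^ 2).re := by
  have him : z.im ^ 2 < (r / 2) ^ 2 := by
    rw [← sq_abs]; exact pow_lt_pow_left₀ hz (abs_nonneg _) two_ne_zero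
  have hre : (1 + c * z ^ 2).re = 1 + c * (z.re ^ 2 - z.im ^ 2) := by
    simp [sq]
  rw [hre]
  nlinarith [mul_nonneg hc (sq_nonneg z.re), mul_le_mul_of_nonneg_left him.le hc]

theorem norm_iteratedDeriv_two_one_add_mul_sq_cpow_le {c s : ℝ} (hc : 0 ≤ c) (hs₀ : 0 ≤ s)
    (hs₁ : s ≤ 1) {z : ℂ} (hz : 3 / 4 < (1 + c * z ^ 2).re) :
    ‖iteratedDeriv 2 (fun z => (1 + (c : ℂ) * z ^ 2) ^ (s : ℂ)) z‖ ≤ 136 / 9 * c * s := by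
  rw [iteratedDeriv_two_one_add_mul_sq_cpow (mem_slitPlane_iff.2 (Or.inl (by linarith)))]
  set w := 1 + (c : ℂ) * z ^ 2 with hw
  have hw₁ : (c : ℂ) * z ^ 2 = w - 1 := by rw [hw]; ring
  have hnorm : 3 / 4 ≤ ‖w‖ := hz.le.trans (re_le_norm w)
  rw [hw₁, norm_mul, norm_mul, norm_mul, norm_real, norm_real, Real.norm_of_nonneg hc,
    Real.norm_of_nonneg hs₀, Complex.norm_two]
  calc 2 * c * s * _ ≤ 2 * c * s * (68 / 9) := by
        gcongr; exact norm_cpow_sub_one_add_le hs₀ hs₁ hnorm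
    _ = 136 / 9 * c * s := by ring

theorem f_second_deriv_bound :
    ∃ C > 0, ∀ p β : ℝ, 0 < p → p ≤ 2 → 0 < β → β ≤ 1 →
      ∀ α : ℝ, α = 1 - p / 3 →
      ∀ f : ℂ → ℂ,
        (f = fun z => ((β : ℂ) ^ (α : ℂ)) *
          (1 + (β : ℂ) ^ ((2 * (1 - α) / p : ℝ) : ℂ) * z ^ 2) ^ ((p : ℂ) / 2)) →
      ∀ z : ℂ, |z.im| < (1 / 2) * β ^ (-(1 - α) / p) →
        ‖iteratedDeriv 2 f z‖ ≤ C * β ^ (α + 2 * (1 - α) / p) := by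
  refine ⟨16, by norm_num, ?_⟩
  rintro p β hp hp₂ hβ - α rfl f rfl z hz
  have hexp₁ : 2 * (1 - (1 - p / 3)) / p = 2 / 3 := by field_simp; ring
  have hexp₂ : -(1 - (1 - p / 3)) / p = -(1 / 3) := by field_simp; ring
  have hs : (p : ℂ) / 2 = ((p / 2 : ℝ) : ℂ) := by push_cast; rfl
  rw [hexp₁, hs, ← ofReal_cpow hβ.le, ← ofReal_cpow hβ.le, iteratedDeriv_const_mul_field]
  rw [hexp₂] at hz
  have hcr : β ^ (2 / 3 : ℝ) * (β ^ (-(1 / 3) : ℝ)) ^ 2 = 1 := by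
    rw [← Real.rpow_natCast, ← Real.rpow_mul hβ.le, ← Real.rpow_add hβ]; norm_num
  have hre := three_quarters_lt_re_one_add_mul_sq (by positivity) hcr (z := z) (by linarith)
  have hbound := norm_iteratedDeriv_two_one_add_mul_sq_cpow_le (s := p / 2) (by positivity)
    (by positivity) (by linarith) hre
  rw [norm_mul, norm_real, Real.norm_of_nonneg (by positivity), Real.rpow_add hβ]
  calc β ^ (1 - p / 3) * _ ≤ β ^ (1 - p / 3) * (136 / 9 * β ^ (2 / 3 : ℝ) * (p / 2)) :=
        mul_le_mul_of_nonneg_left hbound (by positivity)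
    _ ≤ 16 * (β ^ (1 - p / 3) * β ^ (2 / 3 : ℝ)) := by
      nlinarith [mul_pos (Real.rpow_pos_of_pos hβ (1 - p / 3))
        (Real.rpow_pos_of_pos hβ (2 / 3 : ℝ))]
end

section
/- Let 0 < p ≤ 2, 0 < β ≤ 1, α = 1 - p/3, and f(n) = β^α·(1 + β^{2(1-α)/p}·n²)^{p/2} for n ∈ ℤ. Define s_n = β·|n|^p - f(n). Then there is a universal constant C such that |s_n| ≤ C·β^{1/3}/(1 + |n|^{2-p}) for all n ∈ ℤ. -/
/-! Put `b = β^(1/3)` and `t = b|n|`. Then `β^α = b^(3-p)` and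
`s_n = -b^(3-p) ((1 + t²)^(p/2) - t^p)`. The gap `(1 + t²)^(p/2) - t^p` is at most `1` by
subadditivity of `x ↦ x^(p/2)`, and at most `(p/2) t^(p-2)` by Bernoulli's inequality applied to
`(1 + t⁻²)^(p/2)`; hence its product with `1 + t^(2-p)` is at most `2`. Finally `b ≤ 1` gives
`b^(3-p) (1 + |n|^(2-p)) ≤ b (1 + t^(2-p))`, so `C = 2` works. -/

open Real

section PowGap

variable {p t : ℝ}

lemma sq_rpow_div_two (ht : 0 ≤ t) (p : ℝ) : (t ^ 2) ^ (p / 2) = t ^ p := by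
  rw [← rpow_two, ← rpow_mul ht]
  ring_nf

lemma rpow_le_one_add_sq_rpow_div_two (ht : 0 ≤ t) (hp : 0 ≤ p) :
    t ^ p ≤ (1 + t ^ 2) ^ (p / 2) := by
  rw [← sq_rpow_div_two ht p]
  gcongr
  linarith

lemma one_add_sq_rpow_div_two_sub_rpow_le_one (ht : 0 ≤ t) (hp : 0 ≤ p) (hp2 : p ≤ 2) :
    (1 + t ^ 2) ^ (p / 2) - t ^ p ≤ 1 := by
  have := rpow_add_le_add_rpow zero_le_one (sq_nonneg t) (by linarith : 0 ≤ p / 2)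
    (by linarith : p / 2 ≤ 1)
  rw [one_rpow, sq_rpow_div_two ht] at this
  linarith

lemma one_add_sq_rpow_div_two_sub_rpow_mul_rpow_le (ht : 0 < t) (hp : 0 ≤ p) (hp2 : p ≤ 2) :
    ((1 + t ^ 2) ^ (p / 2) - t ^ p) * t ^ (2 - p) ≤ p / 2 := by
  have hsplit : 1 + t ^ 2 = t ^ 2 * (1 + (t ^ 2)⁻¹) := by field_simp; ring
  have hbernoulli : (1 + (t ^ 2)⁻¹) ^ (p / 2) ≤ 1 + p / 2 * (t ^ 2)⁻¹ :=
    rpow_one_add_le_one_add_mul_self (by linarith [inv_nonneg.2 (sq_nonneg t)])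
      (by linarith) (by linarith)
  have hcancel : t ^ p * t ^ (2 - p) = t ^ 2 := by
    rw [← rpow_add ht, add_sub_cancel, rpow_two]
  have hgap : (1 + t ^ 2) ^ (p / 2) - t ^ p ≤ p / 2 * t ^ p * (t ^ 2)⁻¹ := by
    rw [hsplit, mul_rpow (sq_nonneg t) (by positivity), sq_rpow_div_two ht.le]
    nlinarith [rpow_nonneg ht.le p]
  calc ((1 + t ^ 2) ^ (p / 2) - t ^ p) * t ^ (2 - p)
      ≤ p / 2 * t ^ p * (t ^ 2)⁻¹ * t ^ (2 - p) := by gcongr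
    _ = p / 2 := by rw [mul_right_comm, mul_assoc (p / 2), hcancel]; field_simp

lemma one_add_sq_rpow_div_two_sub_rpow_mul_one_add_rpow_le_two (ht : 0 ≤ t) (hp : 0 ≤ p)
    (hp2 : p ≤ 2) : ((1 + t ^ 2) ^ (p / 2) - t ^ p) * (1 + t ^ (2 - p)) ≤ 2 := by
  have hgap_nonneg := sub_nonneg.2 (rpow_le_one_add_sq_rpow_div_two ht hp)
  have hgap_le_one := one_add_sq_rpow_div_two_sub_rpow_le_one ht hp hp2
  have htail : ((1 + t ^ 2) ^ (p / 2) - t ^ p) * t ^ (2 - p) ≤ 1 := by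
    rcases ht.eq_or_lt with rfl | ht
    · exact mul_le_one₀ hgap_le_one (zero_rpow_nonneg _) (zero_rpow_le_one _)
    · linarith [one_add_sq_rpow_div_two_sub_rpow_mul_rpow_le ht hp hp2]
  linarith

end PowGap

section Rescaling

variable {p β m : ℝ}

lemma mul_rpow_sub_eq_neg_rescaled_gap (hβ : 0 < β) (hm : 0 ≤ m) :
    β * m ^ p - β ^ (1 - p / 3) * (1 + β ^ ((2 : ℝ) / 3) * m ^ 2) ^ (p / 2) =
      -(β ^ (1 - p / 3) *
        ((1 + (β ^ ((1 : ℝ) / 3) * m) ^ 2) ^ (p / 2) - (β ^ ((1 : ℝ) / 3) * m) ^ p)) := by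
  have hsq : (β ^ ((1 : ℝ) / 3) * m) ^ 2 = β ^ ((2 : ℝ) / 3) * m ^ 2 := by
    rw [mul_pow, ← rpow_two, ← rpow_mul hβ.le]; norm_num
  have hpow : β ^ (1 - p / 3) * (β ^ ((1 : ℝ) / 3) * m) ^ p = β * m ^ p := by
    rw [mul_rpow (rpow_nonneg hβ.le _) hm, ← rpow_mul hβ.le, ← mul_assoc, ← rpow_add hβ,
      show 1 - p / 3 + 1 / 3 * p = 1 by ring, rpow_one]
  rw [hsq, mul_sub, hpow]
  ring

lemma rpow_mul_one_add_rpow_le (hp2 : p ≤ 2) (hβ : 0 < β) (hβ1 : β ≤ 1) (hm : 0 ≤ m) :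
    β ^ (1 - p / 3) * (1 + m ^ (2 - p)) ≤
      β ^ ((1 : ℝ) / 3) * (1 + (β ^ ((1 : ℝ) / 3) * m) ^ (2 - p)) := by
  have hsplit : β ^ ((1 : ℝ) / 3) * (β ^ ((1 : ℝ) / 3) * m) ^ (2 - p) =
      β ^ (1 - p / 3) * m ^ (2 - p) := by
    rw [mul_rpow (rpow_nonneg hβ.le _) hm, ← rpow_mul hβ.le, ← mul_assoc, ← rpow_add hβ]
    ring_nf
  have hβpow : β ^ (1 - p / 3) ≤ β ^ ((1 : ℝ) / 3) :=
    rpow_le_rpow_of_exponent_ge hβ hβ1 (by linarith)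
  rw [mul_add, mul_add, hsplit, mul_one, mul_one]
  linarith

lemma abs_mul_rpow_sub_le (hp : 0 ≤ p) (hp2 : p ≤ 2) (hβ : 0 < β) (hβ1 : β ≤ 1)
    (hm : 0 ≤ m) :
    |β * m ^ p - β ^ (1 - p / 3) * (1 + β ^ ((2 : ℝ) / 3) * m ^ 2) ^ (p / 2)| ≤
      2 * β ^ ((1 : ℝ) / 3) / (1 + m ^ (2 - p)) := by
  set t := β ^ ((1 : ℝ) / 3) * m
  have ht : 0 ≤ t := mul_nonneg (rpow_nonneg hβ.le _) hm
  have hgap_nonneg := sub_nonneg.2 (rpow_le_one_add_sq_rpow_div_two ht hp)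
  rw [mul_rpow_sub_eq_neg_rescaled_gap hβ hm, abs_neg, abs_of_nonneg (by positivity),
    le_div_iff₀ (by positivity)]
  calc β ^ (1 - p / 3) * ((1 + t ^ 2) ^ (p / 2) - t ^ p) * (1 + m ^ (2 - p))
      = β ^ (1 - p / 3) * (1 + m ^ (2 - p)) * ((1 + t ^ 2) ^ (p / 2) - t ^ p) := by ring
    _ ≤ β ^ ((1 : ℝ) / 3) * (1 + t ^ (2 - p)) * ((1 + t ^ 2) ^ (p / 2) - t ^ p) :=
      mul_le_mul_of_nonneg_right (rpow_mul_one_add_rpow_le hp2 hβ hβ1 hm) hgap_nonneg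
    _ ≤ β ^ ((1 : ℝ) / 3) * 2 := by
      rw [mul_assoc, mul_comm (1 + _)]
      gcongr
      exact one_add_sq_rpow_div_two_sub_rpow_mul_one_add_rpow_le_two ht hp hp2
    _ = 2 * β ^ ((1 : ℝ) / 3) := mul_comm _ _

end Rescaling

theorem s_n_bound :
    ∃ C > 0, ∀ p β : ℝ, 0 < p → p ≤ 2 → 0 < β → β ≤ 1 →
      ∀ α : ℝ, α = 1 - p / 3 →
      ∀ n : ℤ,
        |β * |(n : ℝ)| ^ p -
            β ^ α * (1 + β ^ (2 * (1 - α) / p) * (n : ℝ) ^ 2) ^ (p / 2)| ≤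
          C * β ^ ((1 : ℝ) / 3) / (1 + |(n : ℝ)| ^ (2 - p)) := by
  refine ⟨2, two_pos, fun p β hp hp2 hβ hβ1 α hα n => ?_⟩
  have hexp : 2 * (1 - α) / p = 2 / 3 := by
    rw [hα]; field_simp; ring
  rw [hexp, hα, ← sq_abs]
  exact abs_mul_rpow_sub_le hp.le hp2 hβ hβ1 (abs_nonneg _)
end

section
/- Let Λ ⊆ ℤ² be finite, σ: ℤ² → ℝ supported in Λ, and let ρ: ℤ² → ℤ be a finitely supported neutral charge density (∑_i ρ(i) = 0) whose support is contained in a set D ⊆ ℤ² such that any two points of supp(ρ) are joined by a nearest-neighbor path in D. Then |∑_i ρ(i)·σ(i)| ≤ (1/2)·‖ρ‖₁·|D|^{1/2}·‖(∇σ)↾_D‖₂, where ‖ρ‖₁ = ∑_i |ρ(i)| and ‖(∇σ)↾_D‖₂² = ∑_{i∼j, i,j∈D} (σ(i)-σ(j))². -/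
/-!
Let `a` and `b` be points of `supp ρ` where `σ` is smallest and largest, and `c` the midpoint of
`σ a` and `σ b`. Neutrality gives `∑ ρ σ = ∑ ρ (σ - c)`, and `|σ - c| ≤ (σ b - σ a) / 2` on
`supp ρ`, so `|∑ ρ σ| ≤ ‖ρ‖₁ (σ b - σ a) / 2`. A self-avoiding path from `a` to `b` inside `D` has
at most `|D|` steps, and its steps together with their reversals are distinct directed edges of
`D`; telescoping and Cauchy–Schwarz give `σ b - σ a ≤ |D|^{1/2} ‖(∇σ)↾D‖₂`.
-/

/-- Nearest-neighbour adjacency on `ℤ²`. -/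
def Adj (i j : ℤ × ℤ) : Prop := |i.1 - j.1| + |i.2 - j.2| = 1

instance (i j : ℤ × ℤ) : Decidable (Adj i j) := by unfold Adj; infer_instance

open Finset

namespace SimpleGraph

variable {V : Type*}

/-- `‖(∇σ)↾D‖₂²`: each edge inside `D` appears twice in the double sum. -/
noncomputable def dirichletEnergy (G : SimpleGraph V) [DecidableRel G.Adj] (D : Finset V)
    (σ : V → ℝ) : ℝ :=
  (1 / 2) * ∑ i ∈ D, ∑ j ∈ D, if G.Adj i j then (σ i - σ j) ^ 2 else 0

variable {G : SimpleGraph V}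

theorem exists_isPath_support_subset_of_reflTransGen {D : Set V} {u v : V} (hu : u ∈ D)
    (h : Relation.ReflTransGen (fun a b => G.Adj a b ∧ a ∈ D ∧ b ∈ D) u v) :
    ∃ p : G.Walk u v, p.IsPath ∧ ∀ w ∈ p.support, w ∈ D := by
  classical
  suffices ∃ p : G.Walk u v, ∀ w ∈ p.support, w ∈ D by
    obtain ⟨p, hp⟩ := this
    exact ⟨p.bypass, p.bypass_isPath, fun w hw => hp w (p.support_bypass_subset_support hw)⟩
  induction h using Relation.ReflTransGen.head_induction_on with
  | refl => exact ⟨.nil, by simpa using hu⟩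
  | head hab _ ih =>
    obtain ⟨p, hp⟩ := ih hab.2.2
    exact ⟨.cons hab.1 p, by simpa [hu] using hp⟩

namespace Walk

theorem sub_eq_sum_darts {M : Type*} [AddCommGroup M] (f : V → M) {u v : V} (p : G.Walk u v) :
    f u - f v = (p.darts.map fun d => f d.fst - f d.snd).sum := by
  induction p with
  | nil => simp
  | cons h q ih => simp [← ih]

theorem IsTrail.symm_notMem_darts {u v : V} {p : G.Walk u v} (hp : p.IsTrail) {d : G.Dart}
    (hd : d ∈ p.darts) : d.symm ∉ p.darts := fun hd' =>
  d.symm_ne <| List.inj_on_of_nodup_map hp.edges_nodup hd' hd d.edge_symm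

end Walk

variable [DecidableRel G.Adj]

theorem sum_darts_sq_le_dirichletEnergy (D : Finset V) (σ : V → ℝ) (P : Finset G.Dart)
    (hP : ∀ d ∈ P, d.symm ∉ P) (hPD : ∀ d ∈ P, d.fst ∈ D ∧ d.snd ∈ D) :
    ∑ d ∈ P, (σ d.fst - σ d.snd) ^ 2 ≤ G.dirichletEnergy D σ := by
  set g : V × V → ℝ := fun x => (σ x.1 - σ x.2) ^ 2
  have hdisj : Disjoint P (P.map ⟨Dart.symm, Dart.symm_involutive.injective⟩) := by
    simp only [Finset.disjoint_left, mem_map, Function.Embedding.coeFn_mk]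
    rintro d hd ⟨d', hd', rfl⟩
    exact hP d' hd' hd
  set Q := P.disjUnion _ hdisj
  have hQ : ∑ d ∈ Q, g d.toProd = 2 * ∑ d ∈ P, g d.toProd := by
    rw [sum_disjUnion, sum_map, two_mul]
    exact congrArg (_ + ·) <| sum_congr rfl fun _ _ => sub_sq_comm _ _
  have hQT : Q.map ⟨Dart.toProd, Dart.toProd_injective⟩ ⊆
      (D ×ˢ D).filter fun x => G.Adj x.1 x.2 := by
    simp only [Q, subset_iff, mem_map, mem_disjUnion, mem_filter, mem_product,
      Function.Embedding.coeFn_mk]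
    rintro _ ⟨d, hd | ⟨d, hd, rfl⟩, rfl⟩
    · exact ⟨hPD d hd, d.adj⟩
    · exact ⟨(hPD d hd).symm, d.symm.adj⟩
  have := sum_le_sum_of_subset_of_nonneg hQT (f := g) fun _ _ _ => sq_nonneg _
  rw [sum_map, Function.Embedding.coeFn_mk, hQ, sum_filter, sum_product] at this
  rw [dirichletEnergy]
  linarith

theorem Walk.IsPath.sq_sub_le_card_mul_dirichletEnergy {D : Finset V} (σ : V → ℝ) {u v : V}
    {p : G.Walk u v} (hp : p.IsPath) (hpD : ∀ w ∈ p.support, w ∈ D) :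
    (σ u - σ v) ^ 2 ≤ #D * G.dirichletEnergy D σ := by
  classical
  have hnodup : p.darts.Nodup := Walk.darts_nodup_of_support_nodup hp.support_nodup
  set P := p.darts.toFinset
  have htel : σ u - σ v = ∑ d ∈ P, (σ d.fst - σ d.snd) := by
    rw [List.sum_toFinset _ hnodup, p.sub_eq_sum_darts]
  have hcard : #P ≤ #D := by
    have hsupp : #p.support.toFinset = #P + 1 := by
      rw [List.toFinset_card_of_nodup hp.support_nodup, List.toFinset_card_of_nodup hnodup,
        p.length_support, p.length_darts]
    have := card_le_card fun w hw => hpD w (List.mem_toFinset.mp hw)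
    omega
  have henergy : ∑ d ∈ P, (σ d.fst - σ d.snd) ^ 2 ≤ G.dirichletEnergy D σ :=
    sum_darts_sq_le_dirichletEnergy D σ P
      (fun d hd => by simpa [P] using hp.isTrail.symm_notMem_darts (List.mem_toFinset.mp hd))
      fun d hd => ⟨hpD _ (p.dart_fst_mem_support_of_mem_darts (List.mem_toFinset.mp hd)),
        hpD _ (p.dart_snd_mem_support_of_mem_darts (List.mem_toFinset.mp hd))⟩
  calc (σ u - σ v) ^ 2 ≤ #P * ∑ d ∈ P, (σ d.fst - σ d.snd) ^ 2 :=
        htel ▸ sq_sum_le_card_mul_sum_sq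
    _ ≤ #D * G.dirichletEnergy D σ :=
      mul_le_mul (by exact_mod_cast hcard) henergy (sum_nonneg fun _ _ => sq_nonneg _)
        (Nat.cast_nonneg _)

theorem abs_sub_le_sqrt_card_mul_sqrt_dirichletEnergy (D : Finset V) (σ : V → ℝ) {u v : V}
    (hu : u ∈ D) (h : Relation.ReflTransGen (fun a b => G.Adj a b ∧ a ∈ D ∧ b ∈ D) u v) :
    |σ u - σ v| ≤ √(#D : ℝ) * √(G.dirichletEnergy D σ) := by
  obtain ⟨p, hp, hpD⟩ := exists_isPath_support_subset_of_reflTransGen (D := (D : Set V)) hu h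
  rw [← Real.sqrt_mul (Nat.cast_nonneg _), ← Real.sqrt_sq_eq_abs]
  exact Real.sqrt_le_sqrt (hp.sq_sub_le_card_mul_dirichletEnergy σ hpD)

end SimpleGraph

theorem abs_sum_mul_le_of_sum_eq_zero {ι : Type*} (s : Finset ι) (ρ σ : ι → ℝ)
    (hρ : ∑ i ∈ s, ρ i = 0) {M : ℝ} (hM : ∀ i ∈ s, ∀ j ∈ s, σ i - σ j ≤ M) :
    |∑ i ∈ s, ρ i * σ i| ≤ M / 2 * ∑ i ∈ s, |ρ i| := by
  obtain rfl | hs := s.eq_empty_or_nonempty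
  · simp
  obtain ⟨b, hb, hmax⟩ := s.exists_max_image σ hs
  obtain ⟨a, ha, hmin⟩ := s.exists_min_image σ hs
  set c := (σ a + σ b) / 2 with hc
  have hcenter : ∑ i ∈ s, ρ i * σ i = ∑ i ∈ s, ρ i * (σ i - c) := by
    simp only [mul_sub, sum_sub_distrib, ← sum_mul, hρ, zero_mul, sub_zero]
  have hclose : ∀ i ∈ s, |σ i - c| ≤ M / 2 := fun i hi => by
    rw [abs_le]
    constructor <;> linarith [hmax i hi, hmin i hi, hM b hb a ha]
  calc |∑ i ∈ s, ρ i * σ i| ≤ ∑ i ∈ s, |ρ i| * |σ i - c| := by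
        rw [hcenter]
        exact (abs_sum_le_sum_abs _ _).trans_eq (sum_congr rfl fun _ _ => abs_mul _ _)
    _ ≤ ∑ i ∈ s, |ρ i| * (M / 2) :=
        sum_le_sum fun i hi => mul_le_mul_of_nonneg_left (hclose i hi) (abs_nonneg _)
    _ = M / 2 * ∑ i ∈ s, |ρ i| := by rw [← sum_mul, mul_comm]

lemma Adj.symm {i j : ℤ × ℤ} (h : Adj i j) : Adj j i := by
  rwa [Adj, abs_sub_comm j.1, abs_sub_comm j.2]

lemma Adj.irrefl (i : ℤ × ℤ) : ¬Adj i i := by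
  simp [Adj]

def gridGraph : SimpleGraph (ℤ × ℤ) where
  Adj := Adj
  symm := ⟨fun _ _ => Adj.symm⟩
  loopless := ⟨Adj.irrefl⟩

instance : DecidableRel gridGraph.Adj := fun i j => inferInstanceAs (Decidable (Adj i j))

theorem neutral_charge_pairing_bound_general
    (σ : ℤ × ℤ → ℝ)
    (ρ : ℤ × ℤ → ℤ)
    (hneutral : ∑ᶠ i, ρ i = 0)
    (D : Finset (ℤ × ℤ)) (hsupp : Function.support ρ ⊆ D)
    (hconn : ∀ i ∈ Function.support ρ, ∀ j ∈ Function.support ρ,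
      Relation.ReflTransGen (fun u v => Adj u v ∧ u ∈ D ∧ v ∈ D) i j) :
    |∑ᶠ i, (ρ i : ℝ) * σ i| ≤
      (1 / 2) * (∑ᶠ i, |(ρ i : ℝ)|) * Real.sqrt (D.card) *
        Real.sqrt ((1 / 2) * ∑ i ∈ D, ∑ j ∈ D, if Adj i j then (σ i - σ j) ^ 2 else 0) := by
  set s := (D.finite_toSet.subset hsupp).toFinset
  have hs : ∀ i, i ∈ s ↔ ρ i ≠ 0 := fun i => by simp [s]
  rw [finsum_eq_sum_of_support_subset ρ fun i hi => (hs i).2 hi] at hneutral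
  rw [finsum_eq_sum_of_support_subset (fun i => (ρ i : ℝ) * σ i) (s := s)
      fun i hi => (hs i).2 (Int.cast_ne_zero.mp (left_ne_zero_of_mul hi)),
    finsum_eq_sum_of_support_subset (fun i => |(ρ i : ℝ)|) (s := s)
      fun i hi => (hs i).2 (Int.cast_ne_zero.mp (abs_ne_zero.mp hi))]
  have hosc : ∀ i ∈ s, ∀ j ∈ s, σ i - σ j ≤ √(#D : ℝ) * √(gridGraph.dirichletEnergy D σ) :=
    fun i hi j hj => (le_abs_self _).trans <|
      gridGraph.abs_sub_le_sqrt_card_mul_sqrt_dirichletEnergy D σ (hsupp ((hs i).1 hi))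
        (hconn i ((hs i).1 hi) j ((hs j).1 hj))
  have hE : gridGraph.dirichletEnergy D σ =
      (1 / 2) * ∑ i ∈ D, ∑ j ∈ D, if Adj i j then (σ i - σ j) ^ 2 else 0 := rfl
  calc |∑ i ∈ s, (ρ i : ℝ) * σ i|
      ≤ √(#D : ℝ) * √(gridGraph.dirichletEnergy D σ) / 2 * ∑ i ∈ s, |(ρ i : ℝ)| :=
        abs_sum_mul_le_of_sum_eq_zero s _ σ (by exact_mod_cast hneutral) hosc
    _ = _ := by rw [hE]; ring

theorem neutral_charge_pairing_bound
    (Λ : Finset (ℤ × ℤ)) (σ : ℤ × ℤ → ℝ)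
    (hσ : Function.support σ ⊆ Λ)
    (ρ : ℤ × ℤ → ℤ) (hρfin : (Function.support ρ).Finite) (hρne : ρ ≠ 0)
    (hneutral : ∑ᶠ i, ρ i = 0)
    (D : Finset (ℤ × ℤ)) (hsupp : Function.support ρ ⊆ D)
    (hconn : ∀ i ∈ Function.support ρ, ∀ j ∈ Function.support ρ,
      Relation.ReflTransGen (fun u v => Adj u v ∧ u ∈ D ∧ v ∈ D) i j) :
    |∑ᶠ i, (ρ i : ℝ) * σ i| ≤
      (1 / 2) * (∑ᶠ i, |(ρ i : ℝ)|) * Real.sqrt (D.card) *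
        Real.sqrt ((1 / 2) * ∑ i ∈ D, ∑ j ∈ D, if Adj i j then (σ i - σ j) ^ 2 else 0) :=
  neutral_charge_pairing_bound_general σ ρ hneutral D hsupp hconn
end
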